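/- Let k > ℓ > 1 and let the set of students be partitioned into sincere students N (who play truthfully) and sophisticated students M (who best respond). For any problem (P,≻,q) where all schools have a common priority order, the Nash equilibrium outcome of the game (SD^ℓ, P) — namely SD(P^ℓ_N, P_M, ≻, q) — has at least as many blocking students under (P,≻,q) as the Nash equilibrium outcome of the game (SD^k, P) — namely SD(P^k_N, P_M, ≻, q). -/

import Mathlib

/-!
School choice framework following Bonkoungou–Nesterov,
"Reforms meet fairness concerns in school and college admissions".

Students `I` and schools `S` are finite types with `|I| > |S|`.
A strict preference relation of a student over `S ∪ {∅}` is represented by a list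
of `Option S` containing every element exactly once (earlier = more preferred);
`none` is the outside option.  A strict priority order of a school is a list of
`I` containing every student exactly once (earlier = higher priority).
-/

namespace SchoolChoice

variable {I S : Type*} [Fintype I] [DecidableEq I] [Fintype S] [DecidableEq S]

/-- `p` is a strict preference relation on `S ∪ {∅}`: a ranking list containing every
element of `Option S` exactly once. -/
def ValidPref (p : List (Option S)) : Prop := p.Nodup ∧ ∀ x : Option S, x ∈ p

/-- `pr` is a strict priority order: a ranking list containing every student exactly once. -/
def ValidPrio (pr : List I) : Prop := pr.Nodup ∧ ∀ i : I, i ∈ pr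

/-- `a` is strictly preferred to `b` under the preference relation `p`. -/
def prefLt (p : List (Option S)) (a b : Option S) : Prop := p.idxOf a < p.idxOf b

/-- `i` has strictly higher priority than `j` under the priority order `pr`. -/
def prioLt (pr : List I) (i j : I) : Prop := pr.idxOf i < pr.idxOf j

instance (p : List (Option S)) (a b : Option S) : Decidable (prefLt p a b) :=
  inferInstanceAs (Decidable (_ < _))

instance (pr : List I) (i j : I) : Decidable (prioLt pr i j) :=
  inferInstanceAs (Decidable (_ < _))

/-- The acceptable schools of `p` (those preferred to the outside option), in preference
order. -/
def acceptables (p : List (Option S)) : List S := (p.takeWhile Option.isSome).filterMap id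

/-- The truncation of `p` after its `k`-th acceptable school: the preference relation
listing, in the same order, only the `min k _` most-preferred acceptable schools of `p`,
all other schools being unacceptable (kept below `none` in their original order). -/
def truncate (p : List (Option S)) (k : ℕ) : List (Option S) :=
  ((acceptables p).take k).map some ++
    none :: p.filter (fun x => decide (x ≠ none ∧ x ∉ ((acceptables p).take k).map some))

/-- `μ` is a matching: it respects the capacities `q`. -/
def IsMatching (q : S → ℕ) (μ : I → Option S) : Prop :=
  ∀ s : S, (Finset.univ.filter (fun i => μ i = some s)).card ≤ q s

/-- The pair `(i, s)` blocks `μ` under the problem `(P, prio, q)`. -/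
def Blocks (P : I → List (Option S)) (prio : S → List I) (q : S → ℕ)
    (μ : I → Option S) (i : I) (s : S) : Prop :=
  prefLt (P i) (some s) (μ i) ∧
    ((Finset.univ.filter (fun j => μ j = some s)).card < q s ∨
      ∃ j : I, μ j = some s ∧ prioLt (prio s) i j)

/-- `i` is a blocking student for `μ` under `(P, prio, q)`. -/
def BlockingStudent (P : I → List (Option S)) (prio : S → List I) (q : S → ℕ)
    (μ : I → Option S) (i : I) : Prop :=
  ∃ s : S, Blocks P prio q μ i s

/-- `μ` is individually rational under `P`. -/
def IndividuallyRational (P : I → List (Option S)) (μ : I → Option S) : Prop :=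
  ∀ i : I, ¬ prefLt (P i) none (μ i)

/-- `μ` is stable at `(P, prio, q)`. -/
def IsStable (P : I → List (Option S)) (prio : S → List I) (q : S → ℕ)
    (μ : I → Option S) : Prop :=
  IndividuallyRational P μ ∧ ∀ i : I, ¬ BlockingStudent P prio q μ i

/-- The number of blocking students for `μ` under `(P, prio, q)`. -/
noncomputable def numBlocking (P : I → List (Option S)) (prio : S → List I) (q : S → ℕ)
    (μ : I → Option S) : ℕ :=
  {i : I | BlockingStudent P prio q μ i}.ncard

/-! ### The Gale–Shapley student-proposing deferred acceptance mechanism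

The state `σ : I → ℕ` records, for each student, how many of her acceptable schools
have already rejected her; she currently applies to the `σ i`-th school on her list
(if any).  At each round every school tentatively keeps the `q s` highest-priority
students among its current applicants and rejects the rest, who move on. -/

/-- The school student `i` currently applies to. -/
def daTarget (P : I → List (Option S)) (σ : I → ℕ) (i : I) : Option S :=
  (acceptables (P i))[σ i]?

/-- The students tentatively held by school `s`: the `q s` highest-priority current
applicants. -/
def daHeld (P : I → List (Option S)) (prio : S → List I) (q : S → ℕ)
    (σ : I → ℕ) (s : S) : List I :=
  ((prio s).filter (fun i => decide (daTarget P σ i = some s))).take (q s)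

/-- One round of deferred acceptance: every rejected student moves to her next choice. -/
def daStep (P : I → List (Option S)) (prio : S → List I) (q : S → ℕ)
    (σ : I → ℕ) : I → ℕ := fun i =>
  match daTarget P σ i with
  | none => σ i
  | some s => if i ∈ daHeld P prio q σ s then σ i else σ i + 1

/-- The Gale–Shapley (student-proposing deferred acceptance) mechanism.  Iterating the
round map `|I| * |S| + 1` times is guaranteed to reach the terminal state. -/
def GS (P : I → List (Option S)) (prio : S → List I) (q : S → ℕ) : I → Option S :=
  fun i =>
    let σ := (daStep P prio q)^[Fintype.card I * Fintype.card S + 1] (fun _ => 0)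
    match daTarget P σ i with
    | none => none
    | some s => if i ∈ daHeld P prio q σ s then some s else none

/-- The constrained Gale–Shapley mechanism `GS^k`. -/
def GSk (k : ℕ) (P : I → List (Option S)) (prio : S → List I) (q : S → ℕ) : I → Option S :=
  GS (fun i => truncate (P i) k) prio q

/-! ### The Boston (immediate acceptance) mechanism -/

/-- Round `t` of the Boston mechanism: each not-yet-accepted student applies to her
`t`-th ranked acceptable school (0-indexed), and each school permanently accepts, up to
its remaining capacity, its highest-priority new applicants. -/
def bostonRound (P : I → List (Option S)) (prio : S → List I) (q : S → ℕ)
    (μ : I → Option S) (t : ℕ) : I → Option S := fun i =>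
  match μ i with
  | some s => some s
  | none =>
    match (acceptables (P i))[t]? with
    | none => none
    | some s =>
      if i ∈ ((prio s).filter
            (fun j => decide (μ j = none ∧ (acceptables (P j))[t]? = some s))).take
          (q s - (Finset.univ.filter (fun j => μ j = some s)).card)
      then some s else none

/-- The Boston (immediate acceptance) mechanism. -/
def Boston (P : I → List (Option S)) (prio : S → List I) (q : S → ℕ) : I → Option S :=
  (List.range (Fintype.card S)).foldl (bostonRound P prio q) (fun _ => none)

/-- The constrained Boston mechanism `β^k`. -/
def Bostonk (k : ℕ) (P : I → List (Option S)) (prio : S → List I) (q : S → ℕ) :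
    I → Option S :=
  Boston (fun i => truncate (P i) k) prio q

/-! ### The first-preference-first mechanism -/

/-- The adjusted priority profile: each first-preference-first school (member of `fpf`)
ranks students first by the rank they assign to it under `P` (counting the ranking of the
outside option as well), ties broken by the original priority; equal-preference schools
keep their original priority. -/
def fpfPrio (fpf : Finset S) (P : I → List (Option S)) (prio : S → List I) : S → List I :=
  fun s =>
    if s ∈ fpf then
      (List.range (Fintype.card S + 1)).flatMap
        (fun r => (prio s).filter (fun i => decide ((P i).idxOf (some s) = r)))
    else prio s

/-- The first-preference-first mechanism with set `fpf` of first-preference-first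
schools: Gale–Shapley run on the adjusted priorities. -/
def FPF (fpf : Finset S) (P : I → List (Option S)) (prio : S → List I) (q : S → ℕ) :
    I → Option S :=
  GS P (fpfPrio fpf P prio) q

/-- The constrained first-preference-first mechanism `FPF^k`. -/
def FPFk (fpf : Finset S) (k : ℕ) (P : I → List (Option S)) (prio : S → List I)
    (q : S → ℕ) : I → Option S :=
  FPF fpf (fun i => truncate (P i) k) prio q

/-! ### Manipulation and equilibrium notions -/

/-- Student `i` is a manipulating student of the mechanism `φ` (with priorities and
capacities fixed) at the true profile `P`. -/
def ManipulatingStudent (φ : (I → List (Option S)) → I → Option S)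
    (P : I → List (Option S)) (i : I) : Prop :=
  ∃ Q : List (Option S), ValidPref Q ∧
    prefLt (P i) (φ (Function.update P i Q) i) (φ P i)

/-- The mechanism `φ` is not manipulable at `P`. -/
def NotManipulable (φ : (I → List (Option S)) → I → Option S)
    (P : I → List (Option S)) : Prop :=
  ∀ i : I, ¬ ManipulatingStudent φ P i

/-- `P'` is a Nash equilibrium of the game `(φ, P)` in which the sophisticated students
are the members of `M` (who may misreport, and best respond) and all other (sincere)
students report truthfully. -/
def NashEq (φ : (I → List (Option S)) → I → Option S) (P : I → List (Option S))
    (M : Finset I) (P' : I → List (Option S)) : Prop :=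
  (∀ i, ValidPref (P' i)) ∧ (∀ i ∉ M, P' i = P i) ∧
    ∀ i ∈ M, ∀ Q : List (Option S), ValidPref Q →
      ¬ prefLt (P i) (φ (Function.update P' i Q) i) (φ P' i)

/-! ### Semi-sophisticated students -/

/-- Student `i` is guaranteed her first choice `s`: `s` is her most-preferred acceptable
school and `i` is among the `q s` highest-priority students at `s`. -/
def GuaranteedFirstChoice (P : I → List (Option S)) (prio : S → List I) (q : S → ℕ)
    (i : I) (s : S) : Prop :=
  (acceptables (P i)).head? = some s ∧ (prio s).idxOf i < q s

instance (P : I → List (Option S)) (prio : S → List I) (q : S → ℕ) (i : I) (s : S) :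
    Decidable (GuaranteedFirstChoice P prio q i s) :=
  inferInstanceAs (Decidable (_ ∧ _))

/-- School `s` is competitive: at least `q s` students are guaranteed their first
choice `s`. -/
def Competitive (P : I → List (Option S)) (prio : S → List I) (q : S → ℕ) (s : S) : Prop :=
  q s ≤ (Finset.univ.filter (fun i => GuaranteedFirstChoice P prio q i s)).card

instance (P : I → List (Option S)) (prio : S → List I) (q : S → ℕ) (s : S) :
    Decidable (Competitive P prio q s) :=
  inferInstanceAs (Decidable (_ ≤ _))

/-- `P'` is a Nash equilibrium of the game `(GS^ℓ, P)` with semi-sophisticated students: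
every student guaranteed her first choice reports truthfully; every other student reports
truthfully if she has at most `ℓ` acceptable schools or all her acceptable schools are
competitive, and otherwise lists as acceptable, in the order given by her true preference,
only her acceptable schools that are not competitive. -/
def SemiSophProfile (ℓ : ℕ) (P : I → List (Option S)) (prio : S → List I) (q : S → ℕ)
    (P' : I → List (Option S)) : Prop :=
  ∀ i : I,
    ((∃ s : S, GuaranteedFirstChoice P prio q i s) → P' i = P i) ∧
    (¬ (∃ s : S, GuaranteedFirstChoice P prio q i s) →
      (((acceptables (P i)).length ≤ ℓ ∨ ∀ s ∈ acceptables (P i), Competitive P prio q s) →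
          P' i = P i) ∧
      (¬ ((acceptables (P i)).length ≤ ℓ ∨
            ∀ s ∈ acceptables (P i), Competitive P prio q s) →
          acceptables (P' i) =
            (acceptables (P i)).filter (fun s => decide (¬ Competitive P prio q s))))


end SchoolChoice

/-!
Under a common priority, deferred acceptance is serial dictatorship: in priority order, each
student takes the first school of her reported list that still has a free seat. Lengthening
the reported lists (from `ℓ` to `k` schools for the sincere students) fills every school at
least as fast: for all `n` and `s`, the `n` highest-priority students take at least as many
seats of `s`. A student blocks exactly when she is unassigned although a school she truly
finds acceptable still had a free seat at her turn. So a student blocking under `k` but not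
under `ℓ` is assigned under `ℓ` but not under `k`; a student assigned under `k` but not under
`ℓ` blocks under `ℓ` but not under `k`; and fewer students are unassigned under `k`. Counting
gives the inequality.
-/

open Finset

theorem List.idxOf_map_of_injective {α β : Type*} [BEq α] [LawfulBEq α] [BEq β] [LawfulBEq β]
    {f : α → β} (hf : Function.Injective f) (l : List α) (a : α) :
    (l.map f).idxOf (f a) = l.idxOf a := by
  induction l with
  | nil => rfl
  | cons b l ih =>
    rw [List.map_cons, List.idxOf_cons, List.idxOf_cons, ih]
    rcases eq_or_ne b a with rfl | h
    · simp
    · rw [beq_false_of_ne h, beq_false_of_ne (hf.ne h)]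

theorem List.Nodup.pairwise_idxOf_lt {α : Type*} [BEq α] [LawfulBEq α] {l : List α}
    (h : l.Nodup) : l.Pairwise (fun a b => l.idxOf a < l.idxOf b) := by
  rw [List.pairwise_iff_getElem]
  intro a b ha hb hab
  rwa [h.idxOf_getElem a ha, h.idxOf_getElem b hb]

theorem List.find?_eq_getElem?_of_forall_lt {α : Type*} {p : α → Bool} {l : List α}
    {m : ℕ} (hbefore : ∀ t < m, ∀ a, l[t]? = some a → p a = false)
    (hat : ∀ a, l[m]? = some a → p a = true) : l.find? p = l[m]? := by
  induction l generalizing m with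
  | nil => simp
  | cons b l ih =>
    cases m with
    | zero => simp [hat b rfl]
    | succ m =>
      rw [List.find?_cons_of_neg (by simp [hbefore 0 m.succ_pos b rfl]), List.getElem?_cons_succ]
      exact ih (fun t ht => hbefore (t + 1) (by omega)) hat

theorem List.find?_eq_some_of_imp {α : Type*} {p p' : α → Bool} {l : List α}
    (hpp' : ∀ a, p a = true → p' a = true) {b : α} (hb : l.find? p' = some b)
    (hpb : p b = true) : l.find? p = some b := by
  obtain ⟨-, as, bs, rfl, has⟩ := List.find?_eq_some_iff_append.1 hb
  refine List.find?_eq_some_iff_append.2 ⟨hpb, as, bs, rfl, fun a ha => ?_⟩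
  have := has a ha
  cases hpa : p a <;> simp_all

theorem List.eq_false_of_idxOf_lt_of_find?_eq_some {α : Type*} [BEq α] [LawfulBEq α]
    {p : α → Bool} {l : List α} {a b : α} (hb : l.find? p = some b)
    (hab : l.idxOf a < l.idxOf b) : p a = false := by
  obtain ⟨hpb, as, bs, rfl, has⟩ := List.find?_eq_some_iff_append.1 hb
  have hbas : b ∉ as := fun hb' => by simpa [hpb] using has b hb'
  by_cases ha : a ∈ as
  · simpa using has a ha
  · rw [List.idxOf_append_of_notMem ha, List.idxOf_append_of_notMem hbas] at hab
    simp at hab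

theorem Finset.card_le_card_of_sdiff_subset {α : Type*} [DecidableEq α] {B B' U U' : Finset α}
    (hB : B \ B' ⊆ U \ U') (hU : U' \ U ⊆ B' \ B) (hcard : #U ≤ #U') : #B ≤ #B' := by
  rw [← card_sdiff_le_card_sdiff_iff] at hcard ⊢
  exact (card_le_card hB).trans (hcard.trans (card_le_card hU))

theorem Function.isFixedPt_iterate_of_potential {α : Type*} {f : α → α} {x : α} (F : α → ℕ)
    (hF : ∀ y, f y ≠ y → F y < F (f y)) {B : ℕ} (hB : ∀ r, F (f^[r] x) ≤ B) {n : ℕ}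
    (hn : B ≤ n) : Function.IsFixedPt f (f^[n] x) := by
  by_contra hfix
  have hmoving : ∀ m ≤ n, f (f^[m] x) ≠ f^[m] x := fun m hm hm' => hfix <| by
    rw [show n = (n - m) + m by omega, Function.iterate_add_apply, Function.iterate_fixed hm']
    exact hm'
  have hgrow : ∀ m ≤ n + 1, m ≤ F (f^[m] x) := by
    intro m
    induction m with
    | zero => exact fun _ => Nat.zero_le _
    | succ m ih =>
      intro hm
      rw [Function.iterate_succ_apply']
      exact (ih (by omega)).trans_lt (hF _ (hmoving m (by omega)))
  have := (hgrow (n + 1) le_rfl).trans (hB (n + 1))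
  omega

namespace SchoolChoice

variable {I S : Type*}

section Preferences

variable {p : List (Option S)} {s x : S}

lemma map_some_acceptables (p : List (Option S)) :
    (acceptables p).map some = p.takeWhile Option.isSome := by
  rw [acceptables, List.map_filterMap_some_eq_filter_map_isSome, List.map_id,
    List.filter_eq_self.2 fun _ hx => List.mem_takeWhile_imp hx]

lemma acceptables_nodup (hp : ValidPref p) : (acceptables p).Nodup :=
  (List.nodup_map_iff (Option.some_injective S)).1
    (map_some_acceptables p ▸ hp.1.sublist (List.takeWhile_sublist _))

lemma map_some_acceptables_isPrefix (p : List (Option S)) : (acceptables p).map some <+: p :=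
  map_some_acceptables p ▸ List.takeWhile_prefix _

variable [DecidableEq S]

lemma acceptables_truncate (p : List (Option S)) (k : ℕ) :
    acceptables (truncate p k) = (acceptables p).take k := by
  rw [truncate, acceptables, List.takeWhile_append_of_pos
    (fun _ hx => by obtain ⟨s, -, rfl⟩ := List.mem_map.1 hx; rfl)]
  rw [List.takeWhile_cons_of_neg (by simp), List.append_nil, List.filterMap_map]
  exact List.filterMap_some

lemma mem_acceptables_iff_idxOf_lt :
    s ∈ acceptables p ↔ p.idxOf (some s) < (acceptables p).length := by
  simpa using (map_some_acceptables_isPrefix p).mem_iff_idxOf_lt_length (some s)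

lemma idxOf_some_of_mem_acceptables (hs : s ∈ acceptables p) :
    p.idxOf (some s) = (acceptables p).idxOf s := by
  rw [← (map_some_acceptables_isPrefix p).idxOf_eq_of_mem (List.mem_map_of_mem hs),
    List.idxOf_map_of_injective (Option.some_injective S)]

lemma idxOf_none_of_validPref (hp : ValidPref p) :
    p.idxOf none = (acceptables p).length := by
  have hsplit := List.takeWhile_append_dropWhile (p := Option.isSome) (l := p)
  rw [← map_some_acceptables] at hsplit
  have hnone : (none : Option S) ∉ (acceptables p).map some := by simp
  match hd : p.dropWhile Option.isSome with
  | [] =>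
    have hmem := hp.2 none
    rw [hd, List.append_nil] at hsplit
    rw [← hsplit] at hmem
    exact (hnone hmem).elim
  | d :: r =>
    have hd' : d = none := by
      simpa [hd] using List.head_dropWhile_not Option.isSome (l := p) (by simp [hd])
    conv_lhs => rw [← hsplit, hd, hd', List.idxOf_append_of_notMem hnone]
    simp

lemma mem_acceptables_iff_prefLt_none (hp : ValidPref p) :
    s ∈ acceptables p ↔ prefLt p (some s) none := by
  rw [prefLt, idxOf_none_of_validPref hp, mem_acceptables_iff_idxOf_lt]

lemma mem_acceptables_of_prefLt (hx : x ∈ acceptables p) (h : prefLt p (some s) (some x)) :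
    s ∈ acceptables p ∧ (acceptables p).idxOf s < (acceptables p).idxOf x := by
  rw [prefLt, idxOf_some_of_mem_acceptables hx] at h
  have hs : s ∈ acceptables p :=
    mem_acceptables_iff_idxOf_lt.2 (h.trans (List.idxOf_lt_length_iff.2 hx))
  exact ⟨hs, idxOf_some_of_mem_acceptables hs ▸ h⟩

end Preferences

section Truncation

variable [DecidableEq I] [DecidableEq S]

/-- The profile `(P^k_N, P_M)`. -/
def sincereTruncation (M : Finset I) (P : I → List (Option S)) (k : ℕ) :
    I → List (Option S) :=
  fun i => if i ∈ M then P i else truncate (P i) k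

variable {M : Finset I} {P : I → List (Option S)}

lemma acceptables_sincereTruncation_isPrefix (k : ℕ) (i : I) :
    acceptables (sincereTruncation M P k i) <+: acceptables (P i) := by
  unfold sincereTruncation
  split_ifs
  · exact List.prefix_refl _
  · rw [acceptables_truncate]
    exact List.take_prefix _ _

lemma acceptables_sincereTruncation_isPrefix_of_le {l k : ℕ} (h : l ≤ k) (i : I) :
    acceptables (sincereTruncation M P l i) <+: acceptables (sincereTruncation M P k i) := by
  unfold sincereTruncation
  split_ifs
  · exact List.prefix_refl _
  · rw [acceptables_truncate, acceptables_truncate]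
    exact List.take_prefix_take_left h

end Truncation

lemma exists_eq_const_of_common_priority [Fintype I] {prio : S → List I}
    (hprio : ∀ s, ValidPrio (prio s)) (hcp : ∀ s s', prio s = prio s') :
    ∃ pr, ValidPrio pr ∧ prio = fun _ => pr := by
  rcases isEmpty_or_nonempty S with hS | ⟨⟨s₀⟩⟩
  · exact ⟨univ.toList, ⟨nodup_toList _, fun i => mem_toList.2 (mem_univ i)⟩,
      funext fun s => hS.elim s⟩
  · exact ⟨prio s₀, hprio s₀, funext fun s => hcp s s₀⟩

lemma card_filter_eq_none_add_sum [Fintype I] [Fintype S] [DecidableEq S]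
    (μ : I → Option S) :
    #{i | μ i = none} + ∑ s, #{i | μ i = some s} = Fintype.card I := by
  rw [← Fintype.sum_option (fun o : Option S => #{i | μ i = o}), ← card_univ (α := I),
    card_eq_sum_card_fiberwise (f := μ) (t := univ) (fun _ _ => mem_univ _)]

section Seats

variable [Fintype I] [DecidableEq I] [DecidableEq S]
  {pr : List I} {μ : I → Option S} {n n' : ℕ} {s : S}

def seatsTaken (pr : List I) (μ : I → Option S) (n : ℕ) (s : S) : ℕ :=
  #{j | pr.idxOf j < n ∧ μ j = some s}

lemma seatsTaken_mono (h : n ≤ n') : seatsTaken pr μ n s ≤ seatsTaken pr μ n' s :=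
  card_le_card fun j hj => by
    simp only [mem_filter, mem_univ, true_and] at hj ⊢
    exact ⟨hj.1.trans_le h, hj.2⟩

lemma seatsTaken_le_card : seatsTaken pr μ n s ≤ #{j | μ j = some s} :=
  card_le_card fun j hj => by
    simp only [mem_filter, mem_univ, true_and] at hj ⊢
    exact hj.2

lemma seatsTaken_of_length_le (hpr : ValidPrio pr) (hn : pr.length ≤ n) :
    seatsTaken pr μ n s = #{j | μ j = some s} := by
  refine congrArg card (filter_congr fun j _ => and_iff_right ?_)
  exact (List.idxOf_lt_length_iff.2 (hpr.2 j)).trans_le hn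

lemma seatsTaken_succ (hpr : ValidPrio pr) (hn : n < pr.length) :
    seatsTaken pr μ (n + 1) s = seatsTaken pr μ n s + if μ pr[n] = some s then 1 else 0 := by
  have hrank : pr.idxOf pr[n] = n := hpr.1.idxOf_getElem n hn
  have hidx : ∀ j, pr.idxOf j < n + 1 ↔ pr.idxOf j < n ∨ j = pr[n] := fun j => by
    rw [Nat.lt_succ_iff_lt_or_eq, ← List.idxOf_inj (hpr.2 j), hrank]
  unfold seatsTaken
  simp_rw [hidx, or_and_right, filter_or]
  rw [card_union_of_disjoint]
  · congr 1
    split_ifs with h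
    · refine card_eq_one.2 ⟨pr[n], ext fun j => ?_⟩
      simp only [mem_filter, mem_univ, true_and, mem_singleton]
      exact ⟨And.left, fun hj => ⟨hj, hj ▸ h⟩⟩
    · simp only [card_eq_zero, filter_eq_empty_iff, mem_univ, true_implies]
      rintro j ⟨rfl, hj⟩
      exact h hj
  · simp only [disjoint_left, mem_filter, mem_univ, true_and]
    rintro j ⟨hj, -⟩ ⟨rfl, -⟩
    exact hj.ne hrank

def IsAvailable (prio : S → List I) (q : S → ℕ) (μ : I → Option S) (i : I) (s : S) : Prop :=
  seatsTaken (prio s) μ ((prio s).idxOf i) s < q s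

instance (prio : S → List I) (q : S → ℕ) (μ : I → Option S) (i : I) (s : S) :
    Decidable (IsAvailable prio q μ i s) :=
  inferInstanceAs (Decidable (_ < _))

/-- With a common priority this characterizes serial dictatorship: in priority order, each
student takes the first school of her list that still has a free seat. -/
def AssignsFirstAvailable (prio : S → List I) (q : S → ℕ) (Q : I → List (Option S))
    (μ : I → Option S) : Prop :=
  ∀ i, μ i = (acceptables (Q i)).find? (fun s => IsAvailable prio q μ i s)

theorem blockingStudent_iff {P Q : I → List (Option S)} {prio : S → List I} {q : S → ℕ} {i : I}
    (hP : ValidPref (P i)) (hprio : ∀ s, ValidPrio (prio s))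
    (hμ : AssignsFirstAvailable prio q Q μ) (hQP : acceptables (Q i) <+: acceptables (P i)) :
    BlockingStudent P prio q μ i ↔
      μ i = none ∧ ∃ s ∈ acceptables (P i), IsAvailable prio q μ i s := by
  have available_of_eq : ∀ {j s}, μ j = some s → IsAvailable prio q μ j s := fun h => by
    simpa using List.find?_some ((hμ _).symm.trans h)
  constructor
  · rintro ⟨s, hpref, hroom⟩
    have hs : IsAvailable prio q μ i s := by
      rcases hroom with hfree | ⟨j, hj, hij⟩
      · exact seatsTaken_le_card.trans_lt hfree
      · exact (seatsTaken_mono hij.le).trans_lt (available_of_eq hj)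
    cases hi : μ i with
    | none => exact ⟨rfl, s, (mem_acceptables_iff_prefLt_none hP).2 (hi ▸ hpref), hs⟩
    | some x =>
      have hfind := (hμ i).symm.trans hi
      obtain ⟨-, hlt⟩ := mem_acceptables_of_prefLt
        (hQP.subset (List.mem_of_find?_eq_some hfind)) (hi ▸ hpref)
      simpa [hs] using List.eq_false_of_idxOf_lt_of_find?_eq_some (hQP.find?_eq_some hfind) hlt
  · rintro ⟨hi, s, hsP, hs⟩
    refine ⟨s, hi ▸ (mem_acceptables_iff_prefLt_none hP).1 hsP, ?_⟩
    by_contra! hfull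
    -- every student seated at `s` then ranks above `i`
    have hle : #{j | μ j = some s} ≤ seatsTaken (prio s) μ ((prio s).idxOf i) s := by
      refine card_le_card fun j hj => ?_
      simp only [mem_filter, mem_univ, true_and] at hj ⊢
      have hji : j ≠ i := by rintro rfl; simp [hi] at hj
      have hne : (prio s).idxOf j ≠ (prio s).idxOf i :=
        fun h => hji ((List.idxOf_inj ((hprio s).2 j)).1 h)
      exact ⟨lt_of_le_of_ne (not_lt.1 (hfull.2 j hj)) hne, hj⟩
    exact absurd (hfull.1.trans hle) (not_le.2 hs)

end Seats

section SerialDictatorship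

variable [Fintype I] [DecidableEq I] [DecidableEq S] {pr : List I} {q : S → ℕ}
  {Q Q' : I → List (Option S)} {μ μ' : I → Option S}

theorem seatsTaken_le_of_isPrefix (hpr : ValidPrio pr)
    (hμ : AssignsFirstAvailable (fun _ => pr) q Q μ)
    (hμ' : AssignsFirstAvailable (fun _ => pr) q Q' μ')
    (hQQ' : ∀ i, acceptables (Q i) <+: acceptables (Q' i)) (n : ℕ) (s : S) :
    seatsTaken pr μ n s ≤ seatsTaken pr μ' n s := by
  induction n generalizing s with
  | zero => simp [seatsTaken]
  | succ n ih =>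
    rcases lt_or_ge n pr.length with hn | hn
    · rw [seatsTaken_succ hpr hn, seatsTaken_succ hpr hn]
      have hrank : pr.idxOf pr[n] = n := hpr.1.idxOf_getElem n hn
      by_cases hs : μ pr[n] = some s
      · have hfind := (hμ pr[n]).symm.trans hs
        have hroom : seatsTaken pr μ n s < q s := by
          simpa [IsAvailable, hrank] using List.find?_some hfind
        by_cases hs' : μ' pr[n] = some s
        · simp only [hs, hs', if_true]
          exact Nat.add_le_add_right (ih s) 1
        · -- otherwise `s` would be the first available school of `pr[n]` under `μ'` as well
          have hfull : q s ≤ seatsTaken pr μ' n s := by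
            refine not_lt.1 fun hlt => hs' ?_
            rw [hμ' pr[n]]
            refine (hQQ' pr[n]).find?_eq_some (List.find?_eq_some_of_imp (fun t ht => ?_) hfind ?_)
            · simp only [IsAvailable, hrank, decide_eq_true_eq] at ht ⊢
              exact (ih t).trans_lt ht
            · simpa [IsAvailable, hrank] using hlt
          simp only [hs, hs', if_true, if_false]
          omega
      · have := ih s
        simp only [hs, if_false]
        split_ifs <;> omega
    · have hlen : pr.length ≤ n + 1 := hn.trans n.le_succ
      simpa only [seatsTaken_of_length_le hpr hlen, seatsTaken_of_length_le hpr hn] using ih s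

theorem numBlocking_le_of_isPrefix [Fintype S] {P : I → List (Option S)}
    (hP : ∀ i, ValidPref (P i)) (hpr : ValidPrio pr)
    (hμ : AssignsFirstAvailable (fun _ => pr) q Q μ)
    (hμ' : AssignsFirstAvailable (fun _ => pr) q Q' μ')
    (hQQ' : ∀ i, acceptables (Q i) <+: acceptables (Q' i))
    (hQ'P : ∀ i, acceptables (Q' i) <+: acceptables (P i)) :
    numBlocking P (fun _ => pr) q μ' ≤ numBlocking P (fun _ => pr) q μ := by
  classical
  have hseats := seatsTaken_le_of_isPrefix hpr hμ hμ' hQQ'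
  have hblock i := blockingStudent_iff (hP i) (fun _ => hpr) hμ ((hQQ' i).trans (hQ'P i))
  have hblock' i := blockingStudent_iff (hP i) (fun _ => hpr) hμ' (hQ'P i)
  have available_of : ∀ {i s}, IsAvailable (fun _ => pr) q μ' i s →
      IsAvailable (fun _ => pr) q μ i s := fun h => (hseats _ _).trans_lt h
  simp only [numBlocking, Set.ncard_eq_toFinset_card', Set.toFinset_ofPred]
  refine card_le_card_of_sdiff_subset (U := {i | μ' i = none}) (U' := {i | μ i = none})
    (fun i => ?_) (fun i => ?_) ?_
  · simp only [mem_sdiff, mem_filter, mem_univ, true_and, hblock, hblock']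
    rintro ⟨⟨hi', s, hsP, hs⟩, hnot⟩
    exact ⟨hi', fun hi => hnot ⟨hi, s, hsP, available_of hs⟩⟩
  · simp only [mem_sdiff, mem_filter, mem_univ, true_and, hblock, hblock']
    rintro ⟨hi, hi'⟩
    obtain ⟨x, hx⟩ := Option.ne_none_iff_exists'.1 hi'
    have hfind := (hμ' i).symm.trans hx
    exact ⟨⟨hi, x, (hQ'P i).subset (List.mem_of_find?_eq_some hfind),
      available_of (by simpa using List.find?_some hfind)⟩, fun h => hi' h.1⟩
  · have hsum : ∑ s, #{i | μ i = some s} ≤ ∑ s, #{i | μ' i = some s} :=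
      sum_le_sum fun s _ => by
        simpa only [seatsTaken_of_length_le hpr le_rfl] using hseats pr.length s
    have := card_filter_eq_none_add_sum μ
    have := card_filter_eq_none_add_sum μ'
    omega

end SerialDictatorship

section DeferredAcceptance

variable [DecidableEq S] {Q : I → List (Option S)}
  {prio : S → List I} {q : S → ℕ} {σ : I → ℕ} {i j : I} {s : S} {n : ℕ}

lemma daTarget_of_mem_daHeld (h : i ∈ daHeld Q prio q σ s) : daTarget Q σ i = some s := by
  simpa using (List.mem_filter.1 (List.mem_of_mem_take h)).2

lemma daHeld_nodup (hprio : ValidPrio (prio s)) : (daHeld Q prio q σ s).Nodup :=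
  (hprio.1.filter _).sublist (List.take_sublist _ _)

variable [DecidableEq I]

lemma daStep_of_mem_daHeld (h : i ∈ daHeld Q prio q σ s) : daStep Q prio q σ i = σ i := by
  simp [daStep, daTarget_of_mem_daHeld h, h]

lemma daStep_of_notMem_daHeld (h : daTarget Q σ i = some s) (hi : i ∉ daHeld Q prio q σ s) :
    daStep Q prio q σ i = σ i + 1 := by
  simp [daStep, h, hi]

lemma daTarget_daStep_of_mem_daHeld (h : i ∈ daHeld Q prio q σ s) :
    daTarget Q (daStep Q prio q σ) i = some s := by
  rw [daTarget, daStep_of_mem_daHeld h]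
  exact daTarget_of_mem_daHeld h

lemma le_daStep : σ i ≤ daStep Q prio q σ i := by
  unfold daStep
  split
  · exact le_rfl
  · split_ifs <;> omega

lemma daStep_le_succ : daStep Q prio q σ i ≤ σ i + 1 := by
  unfold daStep
  split
  · omega
  · split_ifs <;> omega

lemma daStep_le_length (h : σ i ≤ (acceptables (Q i)).length) :
    daStep Q prio q σ i ≤ (acceptables (Q i)).length := by
  cases ht : daTarget Q σ i with
  | none => simpa [daStep, ht] using h
  | some s =>
    have hlt : σ i < (acceptables (Q i)).length := (List.getElem?_eq_some_iff.1 ht).1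
    exact daStep_le_succ.trans hlt

lemma daHeld_full_of_notMem (hprio : ValidPrio (prio s)) (hj : daTarget Q σ j = some s)
    (hnot : j ∉ daHeld Q prio q σ s) :
    (daHeld Q prio q σ s).length = q s ∧
      ∀ x ∈ daHeld Q prio q σ s, (prio s).idxOf x < (prio s).idxOf j := by
  set L := (prio s).filter (fun i => decide (daTarget Q σ i = some s))
  have hjL : j ∈ L := List.mem_filter.2 ⟨hprio.2 j, by simpa using hj⟩
  rw [← List.take_append_drop (q s) L] at hjL
  have hjdrop : j ∈ L.drop (q s) := (List.mem_append.1 hjL).resolve_left hnot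
  have hlen : q s ≤ L.length := by
    by_contra h
    rw [List.drop_eq_nil_of_le (by omega)] at hjdrop
    simp at hjdrop
  refine ⟨List.length_take_of_le hlen, fun x hx => ?_⟩
  have hpair : L.Pairwise (fun a b => (prio s).idxOf a < (prio s).idxOf b) :=
    hprio.1.pairwise_idxOf_lt.sublist List.filter_sublist
  rw [← List.take_append_drop (q s) L, List.pairwise_append] at hpair
  exact hpair.2.2 x hx j hjdrop

lemma mem_daHeld_of_isFixedPt (hσ : Function.IsFixedPt (daStep Q prio q) σ)
    (h : daTarget Q σ i = some s) : i ∈ daHeld Q prio q σ s := by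
  by_contra hi
  have := congrFun hσ i
  rw [daStep_of_notMem_daHeld h hi] at this
  omega

lemma daStep_iterate_le_length (r : ℕ) (i : I) :
    (daStep Q prio q)^[r] (fun _ => 0) i ≤ (acceptables (Q i)).length := by
  induction r with
  | zero => exact Nat.zero_le _
  | succ r ih =>
    rw [Function.iterate_succ_apply']
    exact daStep_le_length ih

variable [Fintype I]

lemma le_seatsTaken_daStep_of_notMem (hprio : ValidPrio (prio s))
    (hj : daTarget Q σ j = some s) (hnot : j ∉ daHeld Q prio q σ s) (hn : (prio s).idxOf j ≤ n) :
    q s ≤ seatsTaken (prio s) (daTarget Q (daStep Q prio q σ)) n s := by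
  obtain ⟨hlen, habove⟩ := daHeld_full_of_notMem hprio hj hnot
  calc q s = (daHeld Q prio q σ s).toFinset.card := by
        rw [List.toFinset_card_of_nodup (daHeld_nodup hprio), hlen]
    _ ≤ _ := card_le_card fun x hx => by
        rw [List.mem_toFinset] at hx
        simp only [mem_filter, mem_univ, true_and]
        exact ⟨(habove x hx).trans_le hn, daTarget_daStep_of_mem_daHeld hx⟩

lemma le_seatsTaken_daStep (hprio : ValidPrio (prio s))
    (h : q s ≤ seatsTaken (prio s) (daTarget Q σ) n s) :
    q s ≤ seatsTaken (prio s) (daTarget Q (daStep Q prio q σ)) n s := by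
  by_cases hstay : ∀ j, (prio s).idxOf j < n → daTarget Q σ j = some s →
      j ∈ daHeld Q prio q σ s
  · refine h.trans (card_le_card fun j hj => ?_)
    simp only [mem_filter, mem_univ, true_and] at hj ⊢
    exact ⟨hj.1, daTarget_daStep_of_mem_daHeld (hstay j hj.1 hj.2)⟩
  · push Not at hstay
    obtain ⟨j, hjn, hj, hnot⟩ := hstay
    exact le_seatsTaken_daStep_of_notMem hprio hj hnot hjn.le

/-- The invariant of deferred acceptance: each school that has rejected `i` (the schools at
positions `t < σ i` of her list) has at least `q s` applicants ranked above `i`. -/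
def RejectersFull (Q : I → List (Option S)) (prio : S → List I) (q : S → ℕ) (σ : I → ℕ) :
    Prop :=
  ∀ i t s, t < σ i → (acceptables (Q i))[t]? = some s →
    q s ≤ seatsTaken (prio s) (daTarget Q σ) ((prio s).idxOf i) s

lemma RejectersFull.daStep (hprio : ∀ s, ValidPrio (prio s)) (h : RejectersFull Q prio q σ) :
    RejectersFull Q prio q (daStep Q prio q σ) := by
  intro i t s ht hts
  rcases Nat.lt_succ_iff_lt_or_eq.1 (ht.trans_le daStep_le_succ) with ht' | rfl
  · exact le_seatsTaken_daStep (hprio s) (h i t s ht' hts)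
  · have hnot : i ∉ daHeld Q prio q σ s := fun hi => by
      rw [daStep_of_mem_daHeld hi] at ht
      exact lt_irrefl _ ht
    exact le_seatsTaken_daStep_of_notMem (hprio s) hts hnot le_rfl

lemma rejectersFull_iterate (hprio : ∀ s, ValidPrio (prio s)) (r : ℕ) :
    RejectersFull Q prio q ((daStep Q prio q)^[r] (fun _ => 0)) := by
  induction r with
  | zero => exact fun _ _ _ ht => absurd ht (Nat.not_lt_zero _)
  | succ r ih =>
    rw [Function.iterate_succ_apply']
    exact ih.daStep hprio

variable [Fintype S]

def daFinal (Q : I → List (Option S)) (prio : S → List I) (q : S → ℕ) : I → ℕ :=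
  (daStep Q prio q)^[Fintype.card I * Fintype.card S + 1] (fun _ => 0)

lemma daFinal_isFixedPt (hQ : ∀ i, (acceptables (Q i)).Nodup) :
    Function.IsFixedPt (daStep Q prio q) (daFinal Q prio q) := by
  refine Function.isFixedPt_iterate_of_potential (fun σ => ∑ i, σ i) (fun σ hσ => ?_)
    (fun r => ?_) (Nat.le_succ _)
  · obtain ⟨i, hi⟩ := Function.ne_iff.1 hσ
    exact sum_lt_sum (fun j _ => le_daStep) ⟨i, mem_univ i, lt_of_le_of_ne le_daStep (Ne.symm hi)⟩
  · calc ∑ i, (daStep Q prio q)^[r] (fun _ => 0) i ≤ ∑ _i : I, Fintype.card S :=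
          sum_le_sum fun i _ => (daStep_iterate_le_length r i).trans (hQ i).length_le_card
      _ = Fintype.card I * Fintype.card S := by simp

lemma GS_eq_daTarget (hQ : ∀ i, (acceptables (Q i)).Nodup) :
    GS Q prio q = daTarget Q (daFinal Q prio q) := by
  funext i
  show (match daTarget Q (daFinal Q prio q) i with
    | none => none
    | some s => if i ∈ daHeld Q prio q (daFinal Q prio q) s then some s else none) = _
  cases h : daTarget Q (daFinal Q prio q) i with
  | none => rfl
  | some s => simp [mem_daHeld_of_isFixedPt (daFinal_isFixedPt hQ) h]

theorem GS_assignsFirstAvailable (hQ : ∀ i, (acceptables (Q i)).Nodup)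
    (hprio : ∀ s, ValidPrio (prio s)) : AssignsFirstAvailable prio q Q (GS Q prio q) := by
  have hfix := daFinal_isFixedPt (prio := prio) (q := q) hQ
  have hinv : RejectersFull Q prio q (daFinal Q prio q) := rejectersFull_iterate hprio _
  rw [GS_eq_daTarget hQ]
  intro i
  refine (List.find?_eq_getElem?_of_forall_lt (m := daFinal Q prio q i) ?_ ?_).symm
  · intro t ht s hts
    exact decide_eq_false (not_lt.2 (hinv i t s ht hts))
  · intro s hs
    have hi := mem_daHeld_of_isFixedPt hfix hs
    refine decide_eq_true ?_
    -- the students seated at `s` above `i` are held there alongside `i`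
    calc seatsTaken (prio s) (daTarget Q (daFinal Q prio q)) ((prio s).idxOf i) s
        ≤ ((daHeld Q prio q (daFinal Q prio q) s).toFinset.erase i).card :=
          card_le_card fun j hj => by
            simp only [mem_filter, mem_univ, true_and] at hj
            exact mem_erase.2 ⟨by rintro rfl; exact lt_irrefl _ hj.1,
              List.mem_toFinset.2 (mem_daHeld_of_isFixedPt hfix hj.2)⟩
      _ < (daHeld Q prio q (daFinal Q prio q) s).toFinset.card :=
          card_erase_lt_of_mem (List.mem_toFinset.2 hi)
      _ ≤ q s := (List.toFinset_card_le _).trans (List.length_take_le _ _)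

end DeferredAcceptance

theorem sdk_counting_with_sincere_and_sophisticated_general
    {I S : Type*} [Fintype I] [DecidableEq I] [Fintype S] [DecidableEq S]
    (k l : ℕ) (hlk : l < k) (M : Finset I)
    (P : I → List (Option S)) (prio : S → List I) (q : S → ℕ)
    (hP : ∀ i, ValidPref (P i)) (hprio : ∀ s, ValidPrio (prio s))
    (hcp : ∀ s s' : S, prio s = prio s') :
    numBlocking P prio q
        (GS (fun i => if i ∈ M then P i else truncate (P i) k) prio q) ≤
      numBlocking P prio q
        (GS (fun i => if i ∈ M then P i else truncate (P i) l) prio q) := by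
  obtain ⟨pr, hpr, rfl⟩ := exists_eq_const_of_common_priority hprio hcp
  have hnodup (n : ℕ) (i : I) : (acceptables (sincereTruncation M P n i)).Nodup :=
    (acceptables_nodup (hP i)).sublist (acceptables_sincereTruncation_isPrefix n i).sublist
  exact numBlocking_le_of_isPrefix hP hpr
    (GS_assignsFirstAvailable (hnodup l) fun _ => hpr)
    (GS_assignsFirstAvailable (hnodup k) fun _ => hpr)
    (acceptables_sincereTruncation_isPrefix_of_le hlk.le)
    (acceptables_sincereTruncation_isPrefix k)

/-- Theorem 4: for `k > ℓ > 1`, sincere students (complement of `M`)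
and sophisticated students `M`, and any problem with common priority, the Nash
equilibrium outcome `SD(P^ℓ_N, P_M, ≻, q)` of `(SD^ℓ, P)` has at least as many blocking
students under `(P,≻,q)` as the Nash equilibrium outcome `SD(P^k_N, P_M, ≻, q)` of
`(SD^k, P)`. -/
theorem sdk_counting_with_sincere_and_sophisticated
    {I S : Type*} [Fintype I] [DecidableEq I] [Fintype S] [DecidableEq S]
    (hIS : Fintype.card S < Fintype.card I)
    (k l : ℕ) (hl : 1 < l) (hlk : l < k) (M : Finset I)
    (P : I → List (Option S)) (prio : S → List I) (q : S → ℕ)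
    (hP : ∀ i, ValidPref (P i)) (hprio : ∀ s, ValidPrio (prio s))
    (hcp : ∀ s s' : S, prio s = prio s') :
    numBlocking P prio q
        (GS (fun i => if i ∈ M then P i else truncate (P i) k) prio q) ≤
      numBlocking P prio q
        (GS (fun i => if i ∈ M then P i else truncate (P i) l) prio q) :=
  sdk_counting_with_sincere_and_sophisticated_general k l hlk M P prio q hP hprio hcp

end SchoolChoice
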